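/- arXiv:nlin/0307052 — 2 statements merged into one kernel-verified Lean document; each statement's English description precedes it below -/
import Mathlib

section
/- Let G be a k-regular simple graph on n ≥ 2 vertices and let i(G) be its isoperimetric number. Then the algebraic connectivity of G satisfies λ2(L) ≥ k − √(k² − i(G)²). (Note that i(G) ≤ k for a k-regular graph, so the square root is real.) -/
open Matrix

open Classical in
/-- The Laplacian matrix of a simple graph: `L i i` is the degree of vertex `i`,
`L i j = -1` if `i` and `j` are adjacent, and `L i j = 0` otherwise. -/
noncomputable def lap {V : Type*} [Fintype V] (G : SimpleGraph V) : Matrix V V ℝ :=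
  Matrix.of fun i j =>
    if i = j then ({k | G.Adj i k}.ncard : ℝ) else if G.Adj i j then -1 else 0

/-- The algebraic connectivity `λ₂` : the second smallest eigenvalue of the Laplacian
(for at least 2 vertices), characterized as the minimum of `xᵀ L x` over real vectors
`x` with `∑ i, x i = 0` and `‖x‖ = 1`. -/
noncomputable def lambda2 {V : Type*} [Fintype V] (A : Matrix V V ℝ) : ℝ :=
  sInf {r : ℝ | ∃ x : V → ℝ, (∑ i, x i) = 0 ∧ (∑ i, (x i) ^ 2) = 1 ∧
    r = x ⬝ᵥ A.mulVec x}

/-- The isoperimetric number of a graph on `n` vertices: the minimum over nonempty vertex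
subsets `S` with `|S| ≤ n/2` of `e(S, V∖S)/|S|`, where `e(S, V∖S)` is the number of
edges with exactly one endpoint in `S` (counted here as ordered pairs with first
coordinate in `S`, which counts each crossing edge exactly once). -/
noncomputable def isoNum {n : ℕ} (G : SimpleGraph (Fin n)) : ℝ :=
  sInf {r : ℝ | ∃ S : Finset (Fin n), S.Nonempty ∧ 2 * S.card ≤ n ∧
    r = ({p : Fin n × Fin n | G.Adj p.1 p.2 ∧ p.1 ∈ S ∧ p.2 ∉ S}.ncard : ℝ) / S.card}

namespace IsoAux

open Finset Classical

variable {n : ℕ}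

noncomputable def a (G : SimpleGraph (Fin n)) (u v : Fin n) : ℝ :=
  if G.Adj u v then 1 else 0

lemma a_nonneg (G : SimpleGraph (Fin n)) (u v : Fin n) : 0 ≤ a G u v := by
  unfold a; split_ifs <;> norm_num

lemma a_symm (G : SimpleGraph (Fin n)) (u v : Fin n) : a G u v = a G v u := by
  unfold a; simp [SimpleGraph.adj_comm]

lemma a_sq (G : SimpleGraph (Fin n)) (u v : Fin n) : a G u v * a G u v = a G u v := by
  unfold a; split_ifs <;> norm_num

/-- real crossing-edge count from S to its complement -/
noncomputable def F (G : SimpleGraph (Fin n)) (S : Finset (Fin n)) : ℝ :=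
  ∑ u ∈ S, ∑ v ∈ Sᶜ, a G u v

lemma F_eq_ite (G : SimpleGraph (Fin n)) (S : Finset (Fin n)) :
    F G S = ∑ u, ∑ v, (if u ∈ S ∧ v ∉ S then a G u v else 0) := by
  unfold F
  rw [show (∑ u, ∑ v, (if u ∈ S ∧ v ∉ S then a G u v else 0))
      = ∑ u, (if u ∈ S then ∑ v, (if v ∈ Sᶜ then a G u v else 0) else 0) from ?_]
  · rw [Finset.sum_ite_mem, Finset.univ_inter]
    apply Finset.sum_congr rfl
    intro u _
    rw [Finset.sum_ite_mem, Finset.univ_inter]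
  · apply Finset.sum_congr rfl
    intro u _
    by_cases hu : u ∈ S
    · simp only [hu, if_true, true_and]
      apply Finset.sum_congr rfl
      intro v _
      by_cases hv : v ∈ S <;> simp [hv]
    · simp [hu]

lemma F_eq_ncard (G : SimpleGraph (Fin n)) (S : Finset (Fin n)) :
    F G S = ({p : Fin n × Fin n | G.Adj p.1 p.2 ∧ p.1 ∈ S ∧ p.2 ∉ S}.ncard : ℝ) := by
  have hset : {p : Fin n × Fin n | G.Adj p.1 p.2 ∧ p.1 ∈ S ∧ p.2 ∉ S}
      = ↑(univ.filter fun p : Fin n × Fin n => G.Adj p.1 p.2 ∧ p.1 ∈ S ∧ p.2 ∉ S) := by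
    ext p; simp
  rw [hset, Set.ncard_coe_finset, Finset.card_filter, F_eq_ite]
  push_cast
  rw [Fintype.sum_prod_type]
  apply Finset.sum_congr rfl
  intro u _
  apply Finset.sum_congr rfl
  intro v _
  by_cases hu : u ∈ S <;> by_cases hv : v ∈ S <;> by_cases hadj : G.Adj u v <;>
    simp [a, hu, hv, hadj]

lemma isoNum_nonneg (G : SimpleGraph (Fin n)) : 0 ≤ isoNum G := by
  apply Real.sInf_nonneg
  rintro r ⟨S, hS, -, rfl⟩
  positivity

lemma isoNum_le (G : SimpleGraph (Fin n)) (S : Finset (Fin n)) (hS : S.Nonempty)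
    (hcard : 2 * S.card ≤ n) : isoNum G * S.card ≤ F G S := by
  have hpos : (0:ℝ) < S.card := by
    exact_mod_cast Finset.card_pos.mpr hS
  have hmem : (({p : Fin n × Fin n | G.Adj p.1 p.2 ∧ p.1 ∈ S ∧ p.2 ∉ S}.ncard : ℝ) / S.card)
      ∈ {r : ℝ | ∃ S : Finset (Fin n), S.Nonempty ∧ 2 * S.card ≤ n ∧
        r = ({p : Fin n × Fin n | G.Adj p.1 p.2 ∧ p.1 ∈ S ∧ p.2 ∉ S}.ncard : ℝ) / S.card} :=
    ⟨S, hS, hcard, rfl⟩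
  have hbdd : BddBelow {r : ℝ | ∃ S : Finset (Fin n), S.Nonempty ∧ 2 * S.card ≤ n ∧
      r = ({p : Fin n × Fin n | G.Adj p.1 p.2 ∧ p.1 ∈ S ∧ p.2 ∉ S}.ncard : ℝ) / S.card} := by
    refine ⟨0, ?_⟩
    rintro r ⟨T, hT, -, rfl⟩
    positivity
  have h := csInf_le hbdd hmem
  rw [← F_eq_ncard] at h
  calc isoNum G * S.card ≤ (F G S / S.card) * S.card := by
        apply mul_le_mul_of_nonneg_right h (le_of_lt hpos)
  _ = F G S := by field_simp

noncomputable def supp (g : Fin n → ℝ) : Finset (Fin n) := univ.filter (fun v => 0 < g v)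

lemma coarea (G : SimpleGraph (Fin n)) (c : ℝ) (hc : 0 ≤ c) :
    ∀ (N : ℕ) (g : Fin n → ℝ), (supp g).card ≤ N → (∀ v, 0 ≤ g v) →
    (∀ t : ℝ, 0 < t →
      c * ((univ.filter fun v => t ≤ g v).card : ℝ) ≤ F G (univ.filter fun v => t ≤ g v)) →
    c * ∑ v, g v ≤ ∑ u, ∑ v, a G u v * max (g u - g v) 0 := by
  intro N
  induction N with
  | zero =>
    intro g hcard hg hlev
    have hs : supp g = ∅ := Finset.card_eq_zero.mp (Nat.le_zero.mp hcard)
    have hg0 : ∀ v, g v = 0 := by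
      intro v
      by_contra h
      have : v ∈ supp g := by
        simp [supp, lt_of_le_of_ne (hg v) (Ne.symm h)]
      simp [hs] at this
    simp [hg0]
  | succ N ih =>
    intro g hcard hg hlev
    rcases Finset.eq_empty_or_nonempty (supp g) with hs | hs
    · have hg0 : ∀ v, g v = 0 := by
        intro v
        by_contra h
        have : v ∈ supp g := by
          simp [supp, lt_of_le_of_ne (hg v) (Ne.symm h)]
        simp [hs] at this
      simp [hg0]
    · set c₀ : ℝ := (supp g).inf' hs g with hc₀def
      have hmem : ∀ v ∈ supp g, 0 < g v := by
        intro v hv; simp only [supp, Finset.mem_filter] at hv; exact hv.2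
      have hc₀pos : 0 < c₀ := by
        rw [hc₀def, Finset.lt_inf'_iff]
        exact hmem
      have hc₀le : ∀ v ∈ supp g, c₀ ≤ g v := fun v hv => Finset.inf'_le g hv
      have hzero : ∀ v, v ∉ supp g → g v = 0 := by
        intro v hv
        by_contra h
        exact hv (by simp [supp, lt_of_le_of_ne (hg v) (Ne.symm h)])
      set g' : Fin n → ℝ := fun v => max (g v - c₀) 0 with hg'def
      have hg'nonneg : ∀ v, 0 ≤ g' v := fun v => le_max_right _ _
      have hsupp' : supp g' = univ.filter fun v => c₀ < g v := by
        ext v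
        simp [supp, hg'def, lt_max_iff, sub_pos]
      have hsub : supp g' ⊆ supp g := by
        rw [hsupp']
        intro v hv
        simp only [supp, Finset.mem_filter] at hv ⊢
        exact ⟨hv.1, hc₀pos.trans hv.2⟩
      obtain ⟨v₀, hv₀mem, hv₀⟩ := Finset.exists_mem_eq_inf' hs g
      have hv₀not : v₀ ∉ supp g' := by
        rw [hsupp']
        simp only [Finset.mem_filter, Finset.mem_univ, true_and, not_lt]
        rw [hc₀def, hv₀]
      have hcard' : (supp g').card ≤ N := by
        have h2 := Finset.card_lt_card ((Finset.ssubset_iff_of_subset hsub).mpr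
          ⟨v₀, hv₀mem, hv₀not⟩)
        omega
      have hlev' : ∀ t : ℝ, 0 < t →
          c * ((univ.filter fun v => t ≤ g' v).card : ℝ) ≤
            F G (univ.filter fun v => t ≤ g' v) := by
        intro t ht
        have heq : (univ.filter fun v => t ≤ g' v) = univ.filter fun v => t + c₀ ≤ g v := by
          ext v
          simp only [Finset.mem_filter, Finset.mem_univ, true_and, hg'def, le_max_iff]
          constructor
          · rintro (h | h)
            · linarith
            · linarith
          · intro h; left; linarith
        rw [heq]
        exact hlev (t + c₀) (by linarith)
      have IH := ih g' hcard' hg'nonneg hlev'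
      have hsuppfilter : (univ.filter fun v => c₀ ≤ g v) = supp g := by
        ext v
        simp only [Finset.mem_filter, Finset.mem_univ, true_and, supp]
        constructor
        · intro h; exact lt_of_lt_of_le hc₀pos h
        · intro h; exact hc₀le v (by simp [supp, h])
      have hlevc₀ := hlev c₀ hc₀pos
      rw [hsuppfilter] at hlevc₀
      have hi : ∑ v, g v = (∑ v, g' v) + c₀ * (supp g).card := by
        have : ∀ v, g v = g' v + (if v ∈ supp g then c₀ else 0) := by
          intro v
          by_cases hv : v ∈ supp g
          · simp only [hv, if_true, hg'def]
            rw [max_eq_left (by linarith [hc₀le v hv])]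
            ring
          · simp only [hv, if_false, hg'def, hzero v hv]
            rw [max_eq_right (by linarith)]
            ring
        rw [Finset.sum_congr rfl (fun v _ => this v), Finset.sum_add_distrib,
          Finset.sum_ite_mem, Finset.univ_inter, Finset.sum_const, nsmul_eq_mul]
        ring
      have hii : ∑ u, ∑ v, a G u v * max (g u - g v) 0
          = (∑ u, ∑ v, a G u v * max (g' u - g' v) 0) + c₀ * F G (supp g) := by
        rw [F_eq_ite, Finset.mul_sum]
        rw [← Finset.sum_add_distrib]
        apply Finset.sum_congr rfl
        intro u _
        rw [Finset.mul_sum, ← Finset.sum_add_distrib]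
        apply Finset.sum_congr rfl
        intro v _
        by_cases hu : u ∈ supp g <;> by_cases hv : v ∈ supp g
        · have h1 : g' u = g u - c₀ := max_eq_left (by linarith [hc₀le u hu])
          have h2 : g' v = g v - c₀ := max_eq_left (by linarith [hc₀le v hv])
          simp only [hg'def] at h1 h2
          simp only [hg'def, h1, h2, hu, hv, not_true, and_false, if_false]
          ring_nf
        · have h1 : g' u = g u - c₀ := max_eq_left (by linarith [hc₀le u hu])
          have h2 : g' v = 0 := max_eq_right (by linarith [hzero v hv, hc₀pos])
          simp only [hg'def] at h1 h2
          simp only [hg'def, h1, h2, hu, hv, not_false_iff, and_true, if_true,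
            hzero v hv, sub_zero]
          rw [max_eq_left (show (0:ℝ) ≤ g u by linarith [hc₀le u hu])]
          ring
        · have h1 : g' u = 0 := max_eq_right (by linarith [hzero u hu, hc₀pos])
          simp only [hg'def] at h1
          have h2 : g' v = g v - c₀ := max_eq_left (by linarith [hc₀le v hv])
          simp only [hg'def] at h2
          simp only [hg'def, h1, h2, hu, hv, false_and, if_false, hzero u hu, zero_sub]
          rw [max_eq_right (by linarith [hmem v hv]), max_eq_right (by linarith [hc₀le v hv])]
          ring
        · have h1 : g' u = 0 := max_eq_right (by linarith [hzero u hu, hc₀pos])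
          have h2 : g' v = 0 := max_eq_right (by linarith [hzero v hv, hc₀pos])
          simp only [hg'def] at h1 h2
          simp only [hg'def, h1, h2, hu, hv, false_and, if_false, hzero u hu, hzero v hv]
          ring
      rw [hi, hii, mul_add]
      have step : c * (c₀ * (supp g).card) ≤ c₀ * F G (supp g) := by
        calc c * (c₀ * (supp g).card) = c₀ * (c * (supp g).card) := by ring
        _ ≤ c₀ * F G (supp g) := by
            apply mul_le_mul_of_nonneg_left hlevc₀ (le_of_lt hc₀pos)
      linarith [IH]

lemma lap_entry (G : SimpleGraph (Fin n)) (k : ℕ)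
    (hreg : ∀ v : Fin n, {w | G.Adj v w}.ncard = k) (i j : Fin n) :
    lap G i j = (if i = j then (k : ℝ) else 0) - a G i j := by
  unfold lap a
  rcases eq_or_ne i j with rfl | hne
  · simp [hreg i, SimpleGraph.irrefl]
  · simp only [Matrix.of_apply, hne, if_false]
    split_ifs <;> norm_num

lemma row_sum (G : SimpleGraph (Fin n)) (k : ℕ)
    (hreg : ∀ v : Fin n, {w | G.Adj v w}.ncard = k) (u : Fin n) :
    ∑ v, a G u v = (k : ℝ) := by
  have hset : {w | G.Adj u w} = ↑(univ.filter fun w => G.Adj u w) := by ext w; simp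
  have := hreg u
  rw [hset, Set.ncard_coe_finset] at this
  rw [← this]
  unfold a
  rw [Finset.card_filter]
  push_cast
  rfl

lemma col_sum (G : SimpleGraph (Fin n)) (k : ℕ)
    (hreg : ∀ v : Fin n, {w | G.Adj v w}.ncard = k) (v : Fin n) :
    ∑ u, a G u v = (k : ℝ) := by
  rw [Finset.sum_congr rfl fun u _ => a_symm G u v]
  exact row_sum G k hreg v

/-- the Laplacian quadratic form -/
noncomputable def Pq (G : SimpleGraph (Fin n)) (z : Fin n → ℝ) : ℝ :=
  ∑ u, ∑ v, a G u v * (z u - z v)^2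

lemma Pq_nonneg (G : SimpleGraph (Fin n)) (z : Fin n → ℝ) : 0 ≤ Pq G z := by
  apply Finset.sum_nonneg; intro u _
  apply Finset.sum_nonneg; intro v _
  exact mul_nonneg (a_nonneg G u v) (sq_nonneg _)

lemma quadform (G : SimpleGraph (Fin n)) (k : ℕ)
    (hreg : ∀ v : Fin n, {w | G.Adj v w}.ncard = k) (x : Fin n → ℝ) :
    x ⬝ᵥ (lap G).mulVec x = (1/2) * Pq G x := by
  have hmv : ∀ u, (lap G).mulVec x u = (k:ℝ) * x u - ∑ v, a G u v * x v := by
    intro u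
    unfold Matrix.mulVec dotProduct
    simp only [lap_entry G k hreg, sub_mul, ite_mul, zero_mul]
    rw [Finset.sum_sub_distrib]
    congr 1
    rw [Finset.sum_eq_single u]
    · simp
    · intro b _ hb; simp [Ne.symm hb]
    · simp
  have hL : x ⬝ᵥ (lap G).mulVec x
      = (k : ℝ) * (∑ u, x u ^ 2) - ∑ u, ∑ v, a G u v * (x u * x v) := by
    unfold dotProduct
    rw [Finset.sum_congr rfl (fun u _ => by rw [hmv u])]
    simp only [mul_sub, Finset.mul_sum, Finset.sum_sub_distrib]
    congr 1
    · exact Finset.sum_congr rfl fun u _ => by ring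
    · apply Finset.sum_congr rfl
      intro u _
      apply Finset.sum_congr rfl
      intro v _
      ring
  rw [hL]
  unfold Pq
  have expand : ∀ u v, a G u v * (x u - x v)^2
      = a G u v * x u^2 + a G u v * x v^2 - 2 * (a G u v * (x u * x v)) := by
    intro u v; ring
  simp only [expand, Finset.sum_sub_distrib, Finset.sum_add_distrib]
  have h1 : ∑ u, ∑ v, a G u v * x u ^ 2 = (k:ℝ) * ∑ u, x u ^ 2 := by
    rw [Finset.mul_sum]
    apply Finset.sum_congr rfl
    intro u _
    rw [← Finset.sum_mul, row_sum G k hreg, mul_comm]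
  have h2 : ∑ u, ∑ v, a G u v * x v ^ 2 = (k:ℝ) * ∑ u, x u ^ 2 := by
    rw [Finset.sum_comm, Finset.mul_sum]
    exact Finset.sum_congr rfl fun v _ => by rw [← Finset.sum_mul, col_sum G k hreg, mul_comm]
  have h3 : ∑ u, ∑ v, 2 * (a G u v * (x u * x v)) = 2 * ∑ u, ∑ v, a G u v * (x u * x v) := by
    rw [Finset.mul_sum]
    apply Finset.sum_congr rfl
    intro u _
    rw [Finset.mul_sum]
  rw [h1, h2, h3]
  ring

lemma card_perm (σ : Equiv.Perm (Fin n)) (p : Fin n → Prop) :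
    (univ.filter fun i => p (σ i)).card = (univ.filter p).card := by
  apply Finset.card_bij (fun i _ => σ i)
  · intro i hi
    simp only [Finset.mem_filter, Finset.mem_univ, true_and] at hi ⊢
    exact hi
  · intro i hi j hj h
    exact σ.injective h
  · intro j hj
    refine ⟨σ.symm j, ?_, by simp⟩
    simp only [Finset.mem_filter, Finset.mem_univ, true_and] at hj ⊢
    simpa using hj

/-- a median value for x : both strict sides have at most n/2 elements. -/
lemma exists_median (hn : 2 ≤ n) (x : Fin n → ℝ) :
    ∃ m : ℝ, 2 * (univ.filter fun v => x v < m).card ≤ n ∧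
      2 * (univ.filter fun v => m < x v).card ≤ n := by
  set σ := Tuple.sort x with hσ
  set y := x ∘ σ with hy
  have hmono : Monotone y := Tuple.monotone_sort x
  have hj : n / 2 < n := by omega
  set j : Fin n := ⟨n / 2, hj⟩ with hjdef
  refine ⟨y j, ?_, ?_⟩
  · have h1 : (univ.filter fun v => x v < y j).card
        = (univ.filter fun i => x (σ i) < y j).card := (card_perm σ _).symm
    have h2 : (univ.filter fun i => y i < y j) ⊆ Finset.Iio j := by
      intro i hi
      simp only [Finset.mem_filter, Finset.mem_univ, true_and] at hi
      simp only [Finset.mem_Iio]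
      by_contra h
      exact absurd (hmono (le_of_not_gt h)) (not_le.mpr hi)
    have h3 := Finset.card_le_card h2
    rw [Fin.card_Iio] at h3
    have : (univ.filter fun v => x v < y j).card ≤ n / 2 := by
      rw [h1]; exact h3
    omega
  · have h1 : (univ.filter fun v => y j < x v).card
        = (univ.filter fun i => y j < x (σ i)).card := (card_perm σ _).symm
    have h2 : (univ.filter fun i => y j < y i) ⊆ Finset.Ioi j := by
      intro i hi
      simp only [Finset.mem_filter, Finset.mem_univ, true_and] at hi
      simp only [Finset.mem_Ioi]
      by_contra h
      exact absurd (hmono (le_of_not_gt h)) (not_le.mpr hi)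
    have h3 := Finset.card_le_card h2
    rw [Fin.card_Ioi] at h3
    have : (univ.filter fun v => y j < x v).card ≤ n - 1 - n / 2 := by
      rw [h1]; exact h3
    omega

/-- nonemptiness witness for the lambda2 set -/
lemma lambda2_set_nonempty (hn : 2 ≤ n) (A : Matrix (Fin n) (Fin n) ℝ) :
    {r : ℝ | ∃ x : Fin n → ℝ, (∑ i, x i) = 0 ∧ (∑ i, (x i) ^ 2) = 1 ∧
      r = x ⬝ᵥ A.mulVec x}.Nonempty := by
  have h01 : (⟨0, by omega⟩ : Fin n) ≠ ⟨1, by omega⟩ := by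
    simp [Fin.ext_iff]
  set i0 : Fin n := ⟨0, by omega⟩
  set i1 : Fin n := ⟨1, by omega⟩
  set s : ℝ := Real.sqrt (1/2) with hs
  have hs2 : s ^ 2 = 1/2 := Real.sq_sqrt (by norm_num)
  set x : Fin n → ℝ := fun i => s * (if i = i0 then 1 else 0) - s * (if i = i1 then 1 else 0)
    with hx
  refine ⟨x ⬝ᵥ A.mulVec x, x, ?_, ?_, rfl⟩
  · simp only [hx, Finset.sum_sub_distrib, ← Finset.mul_sum, Finset.sum_ite_eq',
      Finset.mem_univ, if_true]
    ring
  · have hpt : ∀ i, x i ^ 2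
        = s^2 * (if i = i0 then 1 else 0) + s^2 * (if i = i1 then 1 else 0) := by
      intro i
      have h01' : ¬ (i0 = i1) := h01
      have h10' : ¬ (i1 = i0) := fun h => h01 h.symm
      by_cases h0 : i = i0 <;> by_cases h1 : i = i1
      · exact absurd (h0.symm.trans h1) h01
      · simp [hx, h0, h1, h01']
      · simp [hx, h0, h1, h10']
      · simp [hx, h0, h1]
    rw [Finset.sum_congr rfl fun i _ => hpt i]
    simp only [Finset.sum_add_distrib, ← Finset.mul_sum, Finset.sum_ite_eq',
      Finset.mem_univ, if_true]
    rw [hs2]; ring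

lemma pos_part_sq (p q : ℝ) :
    (max p 0 - max q 0)^2 + (max (-p) 0 - max (-q) 0)^2 ≤ (p - q)^2 := by
  rcases le_total p 0 with hp | hp <;> rcases le_total q 0 with hq | hq
  · rw [max_eq_right hp, max_eq_right hq, max_eq_left (by linarith), max_eq_left (by linarith)]
    nlinarith
  · rw [max_eq_right hp, max_eq_left hq, max_eq_left (by linarith), max_eq_right (by linarith)]
    nlinarith
  · rw [max_eq_left hp, max_eq_right hq, max_eq_right (by linarith), max_eq_left (by linarith)]
    nlinarith
  · rw [max_eq_left hp, max_eq_left hq, max_eq_right (by linarith), max_eq_right (by linarith)]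
    nlinarith

lemma pos_part_sq_sum (p : ℝ) : (max p 0)^2 + (max (-p) 0)^2 = p^2 := by
  rcases le_total p 0 with hp | hp
  · rw [max_eq_right hp, max_eq_left (by linarith)]; ring
  · rw [max_eq_left hp, max_eq_right (by linarith)]; ring

lemma max_add_max_neg (d : ℝ) : max d 0 + max (-d) 0 = |d| := by
  rcases le_total d 0 with hd | hd
  · rw [max_eq_right hd, max_eq_left (by linarith), abs_of_nonpos hd]; ring
  · rw [max_eq_left hd, max_eq_right (by linarith), abs_of_nonneg hd]; ring

/-- symmetrization of the ordered-pair positive-part sum -/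
lemma sum_max_swap (G : SimpleGraph (Fin n)) (g : Fin n → ℝ) :
    ∑ u, ∑ v, a G u v * max (g u - g v) 0 = ∑ u, ∑ v, a G u v * max (g v - g u) 0 := by
  rw [Finset.sum_comm]
  apply Finset.sum_congr rfl
  intro u _
  apply Finset.sum_congr rfl
  intro v _
  rw [a_symm]

lemma two_sum_max (G : SimpleGraph (Fin n)) (g : Fin n → ℝ) :
    2 * (∑ u, ∑ v, a G u v * max (g u - g v) 0) = ∑ u, ∑ v, a G u v * |g u - g v| := by
  rw [two_mul]
  nth_rewrite 2 [sum_max_swap]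
  rw [← Finset.sum_add_distrib]
  apply Finset.sum_congr rfl
  intro u _
  rw [← Finset.sum_add_distrib]
  apply Finset.sum_congr rfl
  intro v _
  rw [← mul_add, show g v - g u = -(g u - g v) from by ring, max_add_max_neg]

/-- Cauchy–Schwarz step -/
lemma cs_step (G : SimpleGraph (Fin n)) (h : Fin n → ℝ) :
    (∑ u, ∑ v, a G u v * |h u^2 - h v^2|)^2
      ≤ Pq G h * (∑ u, ∑ v, a G u v * (h u + h v)^2) := by
  have key := Finset.sum_mul_sq_le_sq_mul_sq Finset.univ
    (fun p : Fin n × Fin n => a G p.1 p.2 * |h p.1 - h p.2|)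
    (fun p : Fin n × Fin n => a G p.1 p.2 * |h p.1 + h p.2|)
  have e1 : ∀ p : Fin n × Fin n,
      (a G p.1 p.2 * |h p.1 - h p.2|) * (a G p.1 p.2 * |h p.1 + h p.2|)
        = a G p.1 p.2 * |h p.1^2 - h p.2^2| := by
    intro p
    have : (a G p.1 p.2 * |h p.1 - h p.2|) * (a G p.1 p.2 * |h p.1 + h p.2|)
        = (a G p.1 p.2 * a G p.1 p.2) * (|h p.1 - h p.2| * |h p.1 + h p.2|) := by ring
    rw [this, a_sq, ← abs_mul]
    congr 2
    ring
  have e2 : ∀ p : Fin n × Fin n,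
      (a G p.1 p.2 * |h p.1 - h p.2|)^2 = a G p.1 p.2 * (h p.1 - h p.2)^2 := by
    intro p
    rw [mul_pow, sq_abs, sq, a_sq]
  have e3 : ∀ p : Fin n × Fin n,
      (a G p.1 p.2 * |h p.1 + h p.2|)^2 = a G p.1 p.2 * (h p.1 + h p.2)^2 := by
    intro p
    rw [mul_pow, sq_abs, sq, a_sq]
  rw [Finset.sum_congr rfl (fun p _ => e1 p), Finset.sum_congr rfl (fun p _ => e2 p),
    Finset.sum_congr rfl (fun p _ => e3 p)] at key
  rw [Fintype.sum_prod_type, Fintype.sum_prod_type, Fintype.sum_prod_type] at key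
  exact key

/-- degree identity for sums of (h u + h v)^2 -/
lemma sum_plus_sq (G : SimpleGraph (Fin n)) (k : ℕ)
    (hreg : ∀ v : Fin n, {w | G.Adj v w}.ncard = k) (h : Fin n → ℝ) :
    ∑ u, ∑ v, a G u v * (h u + h v)^2 = 4 * k * (∑ v, h v ^2) - Pq G h := by
  unfold Pq
  have expand : ∀ u v, a G u v * (h u + h v)^2
      = 2 * (a G u v * h u ^2) + 2 * (a G u v * h v^2) - a G u v * (h u - h v)^2 := by
    intro u v; ring
  simp only [expand, Finset.sum_sub_distrib, Finset.sum_add_distrib]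
  have h1 : ∑ u, ∑ v, 2 * (a G u v * h u ^ 2) = 2 * ((k:ℝ) * ∑ u, h u ^ 2) := by
    rw [Finset.mul_sum, Finset.mul_sum]
    apply Finset.sum_congr rfl
    intro u _
    rw [← Finset.mul_sum, ← Finset.sum_mul, row_sum G k hreg]
  have h2 : ∑ u, ∑ v, 2 * (a G u v * h v ^ 2) = 2 * ((k:ℝ) * ∑ u, h u ^ 2) := by
    rw [Finset.sum_comm, Finset.mul_sum, Finset.mul_sum]
    apply Finset.sum_congr rfl
    intro v _
    rw [← Finset.mul_sum, ← Finset.sum_mul, col_sum G k hreg]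
  rw [h1, h2]
  ring

end IsoAux

set_option maxHeartbeats 1000000 in
open IsoAux Finset in
/-- For a `k`-regular simple graph on `n ≥ 2` vertices with isoperimetric number `i(G)`,
the algebraic connectivity satisfies `λ₂(L) ≥ k − √(k² − i(G)²)`. -/
theorem lambda2_ge_isoperimetric {n : ℕ} (hn : 2 ≤ n) (G : SimpleGraph (Fin n)) (k : ℕ)
    (hreg : ∀ v : Fin n, {w | G.Adj v w}.ncard = k) :
    lambda2 (lap G) ≥ k - Real.sqrt ((k : ℝ) ^ 2 - isoNum G ^ 2) := by
  classical
  rw [ge_iff_le, lambda2]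
  apply le_csInf (lambda2_set_nonempty hn (lap G))
  rintro r ⟨x, hsum, hnorm, rfl⟩
  set i := isoNum G with hidef
  have hi0 : 0 ≤ i := isoNum_nonneg G
  set R := x ⬝ᵥ (lap G).mulVec x with hRdef
  have hRP : R = (1/2) * Pq G x := quadform G k hreg x
  have hR0 : 0 ≤ R := by
    rw [hRP]
    have := Pq_nonneg G x
    linarith
  have hsqrt0 : 0 ≤ Real.sqrt ((k : ℝ) ^ 2 - i ^ 2) := Real.sqrt_nonneg _
  rcases le_or_gt (k:ℝ) R with hk | hk
  · linarith
  -- main case : R < k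
  obtain ⟨m, hm1, hm2⟩ := exists_median hn x
  set u' : Fin n → ℝ := fun v => max (x v - m) 0 with hu'def
  set w' : Fin n → ℝ := fun v => max (m - x v) 0 with hw'def
  have hu'neg : ∀ v, w' v = max (-(x v - m)) 0 := by
    intro v; rw [hw'def]; congr 1; ring
  -- claim A
  have hA : Pq G u' + Pq G w' ≤ Pq G x := by
    unfold Pq
    rw [← Finset.sum_add_distrib]
    apply Finset.sum_le_sum
    intro u _
    rw [← Finset.sum_add_distrib]
    apply Finset.sum_le_sum
    intro v _
    rw [← mul_add]
    apply mul_le_mul_of_nonneg_left _ (a_nonneg G u v)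
    have := pos_part_sq (x u - m) (x v - m)
    rw [hu'def, hw'def]
    simp only []
    calc (max (x u - m) 0 - max (x v - m) 0)^2 + (max (m - x u) 0 - max (m - x v) 0)^2
        = (max (x u - m) 0 - max (x v - m) 0)^2
          + (max (-(x u - m)) 0 - max (-(x v - m)) 0)^2 := by
          congr 3 <;> ring
      _ ≤ ((x u - m) - (x v - m))^2 := pos_part_sq _ _
      _ = (x u - x v)^2 := by ring
  have hPx : Pq G x = 2 * R := by rw [hRP]; ring
  -- sum of squares
  have husq : ∀ v, u' v ^2 + w' v ^2 = (x v - m)^2 := by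
    intro v
    rw [hu'def, hw'def]
    simp only []
    rw [show m - x v = -(x v - m) from by ring]
    exact pos_part_sq_sum (x v - m)
  have hsumsq : (1:ℝ) ≤ ∑ v, (x v - m)^2 := by
    have expand : ∀ v : Fin n, (x v - m)^2 = x v ^2 - (2*m) * x v + m^2 := by
      intro v; ring
    rw [Finset.sum_congr rfl fun v _ => expand v]
    rw [Finset.sum_add_distrib, Finset.sum_sub_distrib, ← Finset.mul_sum, hsum, hnorm,
      Finset.sum_const, nsmul_eq_mul, Finset.card_univ, Fintype.card_fin]
    have : (0:ℝ) ≤ (n:ℝ) * m^2 := by positivity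
    linarith
  have hsplit : (∑ v, u' v ^2) + (∑ v, w' v ^2) = ∑ v, (x v - m)^2 := by
    rw [← Finset.sum_add_distrib]
    exact Finset.sum_congr rfl fun v _ => husq v
  have hsu : supp u' = univ.filter fun v => m < x v := by
    ext v
    simp [supp, hu'def, lt_max_iff, sub_pos]
  have hsw : supp w' = univ.filter fun v => x v < m := by
    ext v
    simp [supp, hw'def, lt_max_iff, sub_pos]
  have hcu : 2 * (supp u').card ≤ n := by rw [hsu]; exact hm2
  have hcw : 2 * (supp w').card ≤ n := by rw [hsw]; exact hm1
  have hu'0 : ∀ v, 0 ≤ u' v := fun v => le_max_right _ _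
  have hw'0 : ∀ v, 0 ≤ w' v := fun v => le_max_right _ _
  have hu'sq0 : 0 ≤ ∑ v, u' v ^2 := Finset.sum_nonneg fun v _ => sq_nonneg _
  have hw'sq0 : 0 ≤ ∑ v, w' v ^2 := Finset.sum_nonneg fun v _ => sq_nonneg _
  -- select h
  obtain ⟨h, hh0, hhsupp, hhS, hhP⟩ :
      ∃ h : Fin n → ℝ, (∀ v, 0 ≤ h v) ∧ 2 * (supp h).card ≤ n
        ∧ 0 < ∑ v, h v ^2 ∧ Pq G h ≤ 2 * R * (∑ v, h v ^2) := by
    by_cases hZu : ∑ v, u' v ^2 = 0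
    · refine ⟨w', hw'0, hcw, ?_, ?_⟩
      · have : ∑ v, w' v ^2 = ∑ v, (x v - m)^2 := by rw [← hsplit, hZu]; ring
        rw [this]; linarith
      · have hPu0 : Pq G u' = 0 := by
          have huz : ∀ v, u' v = 0 := by
            intro v
            have := (Finset.sum_eq_zero_iff_of_nonneg (fun v _ => sq_nonneg (u' v))).mp hZu
              v (Finset.mem_univ v)
            exact pow_eq_zero_iff (by norm_num) |>.mp this
          unfold Pq
          apply Finset.sum_eq_zero; intro u _
          apply Finset.sum_eq_zero; intro v _
          rw [huz u, huz v]; ring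
        have hwS : (1:ℝ) ≤ ∑ v, w' v ^2 := by
          have : ∑ v, w' v ^2 = ∑ v, (x v - m)^2 := by rw [← hsplit, hZu]; ring
          rw [this]; exact hsumsq
        calc Pq G w' ≤ 2 * R := by linarith [hA, hPx, Pq_nonneg G u']
          _ = 2 * R * 1 := by ring
          _ ≤ 2 * R * (∑ v, w' v ^2) := by
              apply mul_le_mul_of_nonneg_left hwS (by linarith)
    · by_cases hZw : ∑ v, w' v ^2 = 0
      · refine ⟨u', hu'0, hcu, lt_of_le_of_ne hu'sq0 (Ne.symm hZu), ?_⟩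
        have hPw0 : Pq G w' = 0 := by
          have hwz : ∀ v, w' v = 0 := by
            intro v
            have := (Finset.sum_eq_zero_iff_of_nonneg (fun v _ => sq_nonneg (w' v))).mp hZw
              v (Finset.mem_univ v)
            exact pow_eq_zero_iff (by norm_num) |>.mp this
          unfold Pq
          apply Finset.sum_eq_zero; intro u _
          apply Finset.sum_eq_zero; intro v _
          rw [hwz u, hwz v]; ring
        have huS : (1:ℝ) ≤ ∑ v, u' v ^2 := by
          have : ∑ v, u' v ^2 = ∑ v, (x v - m)^2 := by rw [← hsplit, hZw]; ring
          rw [this]; exact hsumsq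
        calc Pq G u' ≤ 2 * R := by linarith [hA, hPx, Pq_nonneg G w']
          _ = 2 * R * 1 := by ring
          _ ≤ 2 * R * (∑ v, u' v ^2) := by
              apply mul_le_mul_of_nonneg_left huS (by linarith)
      · have htot : Pq G u' + Pq G w'
            ≤ 2 * R * (∑ v, u' v ^2) + 2 * R * (∑ v, w' v ^2) := by
          have h2R : 2 * R ≤ 2 * R * ((∑ v, u' v ^2) + (∑ v, w' v ^2)) := by
            rw [hsplit]
            nlinarith
          calc Pq G u' + Pq G w' ≤ Pq G x := hA
            _ = 2 * R := hPx
            _ ≤ 2 * R * ((∑ v, u' v ^2) + (∑ v, w' v ^2)) := h2R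
            _ = 2 * R * (∑ v, u' v ^2) + 2 * R * (∑ v, w' v ^2) := by ring
        by_cases hPu : Pq G u' ≤ 2 * R * (∑ v, u' v ^2)
        · exact ⟨u', hu'0, hcu, lt_of_le_of_ne hu'sq0 (Ne.symm hZu), hPu⟩
        · refine ⟨w', hw'0, hcw, lt_of_le_of_ne hw'sq0 (Ne.symm hZw), ?_⟩
          push_neg at hPu
          linarith
  -- apply coarea to g = h^2
  set S : ℝ := ∑ v, h v ^2 with hSdef
  set g : Fin n → ℝ := fun v => h v ^2 with hgdef
  have hg0 : ∀ v, 0 ≤ g v := fun v => sq_nonneg _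
  have hsuppg : supp g ⊆ supp h := by
    intro v hv
    simp only [supp, Finset.mem_filter, Finset.mem_univ, true_and, hgdef] at hv ⊢
    by_contra hc
    push_neg at hc
    have : h v = 0 := le_antisymm hc (hh0 v)
    rw [this] at hv
    norm_num at hv
  have hlev : ∀ t : ℝ, 0 < t →
      i * ((univ.filter fun v => t ≤ g v).card : ℝ)
        ≤ F G (univ.filter fun v => t ≤ g v) := by
    intro t ht
    set T := univ.filter fun v => t ≤ g v with hTdef
    rcases Finset.eq_empty_or_nonempty T with hT | hT
    · rw [hT]
      simp [F]
    · have hTsub : T ⊆ supp h := by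
        intro v hv
        apply hsuppg
        simp only [hTdef, Finset.mem_filter, Finset.mem_univ, true_and] at hv
        simp only [supp, Finset.mem_filter, Finset.mem_univ, true_and, hgdef]
        have hv' : t ≤ h v ^ 2 := hv
        linarith
      have hTcard : 2 * T.card ≤ n := by
        have := Finset.card_le_card hTsub
        omega
      exact isoNum_le G T hT hTcard
  have hco := coarea G i hi0 (supp g).card g le_rfl hg0 hlev
  have hgsum : ∑ v, g v = S := rfl
  -- symmetrize
  have hsym := two_sum_max G g
  have habs : ∑ u, ∑ v, a G u v * |g u - g v| = ∑ u, ∑ v, a G u v * |h u^2 - h v^2| := rfl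
  -- Cauchy-Schwarz
  have hcs := cs_step G h
  have hplus := sum_plus_sq G k hreg h
  have hplus0 : 0 ≤ ∑ u, ∑ v, a G u v * (h u + h v)^2 := by
    apply Finset.sum_nonneg; intro u _
    apply Finset.sum_nonneg; intro v _
    exact mul_nonneg (a_nonneg G u v) (sq_nonneg _)
  set P : ℝ := Pq G h with hPdef
  have hP0 : 0 ≤ P := Pq_nonneg G h
  have hP4k : P ≤ 4 * k * S := by
    rw [hplus] at hplus0
    linarith
  -- chain : (2 i S)^2 ≤ (2 D)^2 ≤ P (4kS - P) ≤ 4 S^2 R(2k - R)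
  set D : ℝ := ∑ u, ∑ v, a G u v * max (g u - g v) 0 with hDdef
  have hiSD : i * S ≤ D := by rw [← hgsum]; exact hco
  have hD0 : 0 ≤ D := le_trans (by positivity) hiSD
  have h2D : (2 * D)^2 ≤ P * (4 * k * S - P) := by
    calc (2*D)^2 = (∑ u, ∑ v, a G u v * |h u^2 - h v^2|)^2 := by
          rw [← habs, ← hsym, hDdef]
      _ ≤ P * (∑ u, ∑ v, a G u v * (h u + h v)^2) := hcs
      _ = P * (4 * k * S - P) := by rw [hplus]
  have hPle : P ≤ 2 * R * S := hhP
  have hmono : P * (4 * k * S - P) ≤ (2 * R * S) * (4 * k * S - 2 * R * S) := by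
    have h2 : 2 * R * S ≤ 4 * (k:ℝ) * S - 2 * R * S := by nlinarith [le_of_lt hk, le_of_lt hhS]
    nlinarith [mul_nonneg (sub_nonneg.mpr hPle) (show (0:ℝ) ≤ 4 * k * S - 2 * R * S - P by linarith)]
  have hfin : (2 * i * S)^2 ≤ (2 * D)^2 := by
    have h1 : 2 * i * S ≤ 2 * D := by linarith [hiSD]
    have h2 : 0 ≤ 2 * i * S := by positivity
    nlinarith
  have hS2 : (0:ℝ) < S^2 := by positivity
  have hi2 : i^2 ≤ R * (2 * k - R) := by nlinarith [hfin, h2D, hmono, hS2]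
  have hk2 : ((k:ℝ) - R)^2 ≤ (k:ℝ)^2 - i^2 := by nlinarith [hi2]
  have hsq : (k:ℝ) - R ≤ Real.sqrt ((k:ℝ)^2 - i^2) := by
    calc (k:ℝ) - R = Real.sqrt (((k:ℝ) - R)^2) := (Real.sqrt_sq (by linarith)).symm
      _ ≤ Real.sqrt ((k:ℝ)^2 - i^2) := Real.sqrt_le_sqrt hk2
  linarith
end

section
/- Fix a dimension d ≥ 1 and a locality radius δ > 0. For every ε > 0 there exists R such that for all r ≥ R the following holds: if G is any simple graph whose vertex set is the set of lattice points { (a_1,…,a_d) : a_i ∈ {0,1,…,r} } and whose edges only join pairs of vertices at Euclidean distance at most δ, then the algebraic connectivity of G satisfies λ2(L) ≤ ε. In other words, the algebraic connectivity of locally connected arrays on the lattice tends to 0 as the array size grows. -/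
open Matrix

/-! The test vector `a ↦ a₀ - r/2`, a centred first coordinate, is orthogonal to the constants
and has squared norm at least `(r+1)^(d-1) · r²/4`. Locality bounds every vertex degree by
`(2⌈δ⌉+1)^d` and every edge term `(x a - x b)²` by `⌈δ⌉²`, so the Laplacian quadratic form is
`O((r+1)^d)`. The Rayleigh quotient, an upper bound for `λ₂`, is therefore `O(1/r)`. -/

open Finset SimpleGraph Filter

section Laplacian

variable {V : Type*} [Fintype V]

theorem lap_eq_lapMatrix (G : SimpleGraph V) [DecidableEq V] [DecidableRel G.Adj] :
    lap G = G.lapMatrix ℝ := by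
  have hdeg (i : V) : ({k | G.Adj i k}.ncard : ℝ) = G.degree i := by
    rw [← card_neighborFinset_eq_degree, ← Set.ncard_coe_finset, coe_neighborFinset]
    rfl
  ext i j
  by_cases hij : i = j
  · subst hij
    simp [lap, lapMatrix, degMatrix, hdeg]
  · by_cases h : G.Adj i j <;> simp [lap, lapMatrix, degMatrix, hij, h]

theorem lambda2_le_div_of_posSemidef {A : Matrix V V ℝ} (hA : A.PosSemidef) {x : V → ℝ}
    (hsum : ∑ i, x i = 0) (hx : x ≠ 0) :
    lambda2 A ≤ (x ⬝ᵥ A *ᵥ x) / ∑ i, x i ^ 2 := by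
  set s := ∑ i, x i ^ 2
  have hs : 0 < s := by
    obtain ⟨i, hi⟩ := Function.ne_iff.1 hx
    exact sum_pos' (fun j _ => sq_nonneg (x j)) ⟨i, mem_univ i, sq_pos_of_ne_zero hi⟩
  have hbdd : BddBelow {r : ℝ | ∃ y : V → ℝ, (∑ i, y i) = 0 ∧ (∑ i, (y i) ^ 2) = 1 ∧
      r = y ⬝ᵥ A *ᵥ y} := by
    refine ⟨0, ?_⟩
    rintro _ ⟨y, -, -, rfl⟩
    simpa using hA.dotProduct_mulVec_nonneg y
  refine csInf_le hbdd ⟨(√s)⁻¹ • x, ?_, ?_, ?_⟩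
  · simp [← mul_sum, hsum]
  · simp only [Pi.smul_apply, smul_eq_mul, mul_pow, ← mul_sum, inv_pow, Real.sq_sqrt hs.le]
    exact inv_mul_cancel₀ hs.ne'
  · rw [mulVec_smul, dotProduct_smul, smul_dotProduct, smul_eq_mul, smul_eq_mul, ← mul_assoc,
      ← sq, inv_pow, Real.sq_sqrt hs.le, inv_mul_eq_div]

theorem dotProduct_lap_mulVec_le (G : SimpleGraph V) [DecidableRel G.Adj] (x : V → ℝ)
    {M : ℝ} {Δ : ℕ} (hM : 0 ≤ M) (hx : ∀ v w, G.Adj v w → (x v - x w) ^ 2 ≤ M)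
    (hdeg : ∀ v, G.degree v ≤ Δ) :
    x ⬝ᵥ lap G *ᵥ x ≤ M * (Fintype.card V * Δ) / 2 := by
  classical
  rw [lap_eq_lapMatrix, ← toLinearMap₂'_apply', lapMatrix_toLinearMap₂']
  gcongr
  calc ∑ v, ∑ w, (if G.Adj v w then (x v - x w) ^ 2 else 0)
      ≤ ∑ v, ∑ w, (if G.Adj v w then M else 0) := by
        gcongr with v _ w _
        split_ifs with h
        exacts [hx v w h, le_rfl]
    _ = M * ∑ v, (G.degree v : ℝ) := by simp only [degree_eq_sum_if_adj, mul_sum, mul_ite,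
        mul_one, mul_zero]
    _ ≤ M * ∑ _v : V, (Δ : ℝ) := by gcongr with v; exact_mod_cast hdeg v
    _ = M * (Fintype.card V * Δ) := by simp

end Laplacian

theorem sum_comp_eval {ι X R : Type*} [Fintype ι] [DecidableEq ι] [Fintype X] [CommSemiring R]
    (k : ι) (f : X → R) :
    ∑ a : ι → X, f (a k) = (Fintype.card X : R) ^ (Fintype.card ι - 1) * ∑ t, f t := by
  have hprod (a : ι → X) : f (a k) = ∏ i, if i = k then f (a i) else 1 := by
    rw [prod_ite_eq' univ k, if_pos (mem_univ k)]
  rw [Fintype.sum_congr _ _ hprod, ← Fintype.prod_sum fun i t => if i = k then f t else 1,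
    prod_eq_mul_prod_sdiff_singleton_of_mem (mem_univ k)]
  simp [prod_ite_of_false, mul_comm, sdiff_singleton_eq_erase, card_erase_of_mem]

theorem sum_fin_sub_half_eq_zero (r : ℕ) : ∑ t : Fin (r + 1), ((t : ℝ) - r / 2) = 0 := by
  have hgauss : (∑ i ∈ range (r + 1), (i : ℝ)) * 2 = ((r : ℝ) + 1) * r := by
    have h := sum_range_id_mul_two (r + 1)
    rw [Nat.add_sub_cancel] at h
    simpa using congrArg (Nat.cast : ℕ → ℝ) h
  rw [sum_sub_distrib, Fin.sum_univ_eq_sum_range fun i => (i : ℝ)]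
  simp only [sum_const, card_univ, Fintype.card_fin, nsmul_eq_mul, Nat.cast_add, Nat.cast_one]
  linarith

theorem sq_div_four_le_sum_fin_sub_half_sq (r : ℕ) :
    (r : ℝ) ^ 2 / 4 ≤ ∑ t : Fin (r + 1), ((t : ℝ) - r / 2) ^ 2 :=
  calc (r : ℝ) ^ 2 / 4 = (((0 : Fin (r + 1)) : ℝ) - r / 2) ^ 2 := by simp; ring
    _ ≤ _ := single_le_sum (f := fun t : Fin (r + 1) => ((t : ℝ) - r / 2) ^ 2)
      (fun _ _ => sq_nonneg _) (mem_univ 0)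

theorem degree_le_of_forall_adj_abs_sub_le {ι : Type*} [Fintype ι] [DecidableEq ι] {n : ℕ}
    (G : SimpleGraph (ι → Fin n)) [DecidableRel G.Adj] {D : ℕ}
    (hG : ∀ a b, G.Adj a b → ∀ i, |(a i : ℤ) - b i| ≤ D) (a : ι → Fin n) :
    G.degree a ≤ (2 * D + 1) ^ Fintype.card ι := by
  set box := fun i => univ.filter fun t : Fin n => |(a i : ℤ) - t| ≤ D
  have hsub : G.neighborFinset a ⊆ Fintype.piFinset box := by
    intro b hb
    simpa [box] using hG a b ((mem_neighborFinset G a b).1 hb)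
  have hbox (i : ι) : #(box i) ≤ 2 * D + 1 := by
    have hmaps : Set.MapsTo (fun t : Fin n => (t : ℤ)) (box i) (Icc ((a i : ℤ) - D) (a i + D)) := by
      intro t ht
      simp only [box, coe_filter, Set.mem_ofPred_eq, mem_univ, true_and, abs_le] at ht
      simp only [coe_Icc, Set.mem_Icc]
      omega
    calc #(box i) ≤ #(Icc ((a i : ℤ) - D) (a i + D)) :=
          card_le_card_of_injOn _ hmaps fun s _ t _ h => Fin.val_injective (by simpa using h)
      _ = 2 * D + 1 := by rw [Int.card_Icc]; omega
  calc G.degree a = #(G.neighborFinset a) := (card_neighborFinset_eq_degree G a).symm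
    _ ≤ ∏ i, #(box i) := (card_le_card hsub).trans_eq (Fintype.card_piFinset box)
    _ ≤ _ := prod_le_pow_card _ _ _ fun i _ => hbox i

theorem lambda2_lap_le_of_forall_adj_abs_sub_le {ι : Type*} [Fintype ι] [DecidableEq ι] (k : ι)
    {r D : ℕ} (hr : 1 ≤ r) (G : SimpleGraph (ι → Fin (r + 1)))
    (hG : ∀ a b, G.Adj a b → ∀ i, |(a i : ℤ) - b i| ≤ D) :
    lambda2 (lap G) ≤ 4 * D ^ 2 * (2 * D + 1) ^ Fintype.card ι / r := by
  classical
  set N := Fintype.card ι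
  set x : (ι → Fin (r + 1)) → ℝ := fun a => (a k : ℝ) - r / 2
  have hN : 1 ≤ N := Fintype.card_pos_iff.2 ⟨k⟩
  have hrpos : (0 : ℝ) < r := by exact_mod_cast hr
  have hsum : ∑ a, x a = 0 := by
    rw [sum_comp_eval k fun t : Fin (r + 1) => (t : ℝ) - r / 2, sum_fin_sub_half_eq_zero,
      mul_zero]
  have hnorm : ((r : ℝ) + 1) ^ (N - 1) * (r ^ 2 / 4) ≤ ∑ a, x a ^ 2 := by
    rw [sum_comp_eval k fun t : Fin (r + 1) => ((t : ℝ) - r / 2) ^ 2, Fintype.card_fin,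
      Nat.cast_succ]
    gcongr
    exact sq_div_four_le_sum_fin_sub_half_sq r
  have hx : x ≠ 0 := by
    rintro hx
    have : ∑ a, x a ^ 2 = 0 := by simp [hx]
    have : 0 < ((r : ℝ) + 1) ^ (N - 1) * (r ^ 2 / 4) := by positivity
    linarith
  have hedge (a b) (hab : G.Adj a b) : (x a - x b) ^ 2 ≤ (D : ℝ) ^ 2 := by
    have h : |(a k : ℝ) - b k| ≤ D := by exact_mod_cast hG a b hab k
    rw [abs_le] at h
    exact sq_le_sq' (by simp only [x]; linarith) (by simp only [x]; linarith)
  have hquad : x ⬝ᵥ lap G *ᵥ x ≤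
      D ^ 2 * ((r + 1) ^ (N - 1) * (r + 1) * (2 * D + 1) ^ N) / 2 := by
    convert dotProduct_lap_mulVec_le G x (by positivity) hedge
      (degree_le_of_forall_adj_abs_sub_le G hG) using 3
    rw [pow_sub_one_mul (by omega)]
    simp [N]
  calc lambda2 (lap G) ≤ (x ⬝ᵥ lap G *ᵥ x) / ∑ a, x a ^ 2 :=
        lambda2_le_div_of_posSemidef (lap_eq_lapMatrix G ▸ posSemidef_lapMatrix ℝ G) hsum hx
    _ ≤ D ^ 2 * ((r + 1) ^ (N - 1) * (r + 1) * (2 * D + 1) ^ N) / 2 /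
          ((r + 1) ^ (N - 1) * (r ^ 2 / 4)) := by gcongr
    _ = 2 * D ^ 2 * (2 * D + 1) ^ N * (r + 1) / r ^ 2 := by
        field_simp
        ring
    _ ≤ _ := by
        rw [div_le_div_iff₀ (by positivity) hrpos]
        have hK : (0 : ℝ) ≤ D ^ 2 * (2 * D + 1) ^ N * r := by positivity
        have : (r : ℝ) + 1 ≤ 2 * r := by linarith [show (1 : ℝ) ≤ r by exact_mod_cast hr]
        nlinarith [mul_le_mul_of_nonneg_left this hK]

theorem abs_sub_le_natCeil_of_sqrt_sum_sq_le {ι : Type*} [Fintype ι] {n : ℕ} {a b : ι → Fin n}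
    {δ : ℝ} (h : √(∑ i, ((a i : ℝ) - b i) ^ 2) ≤ δ) (i : ι) : |(a i : ℤ) - b i| ≤ ⌈δ⌉₊ := by
  have hi : |(a i : ℝ) - b i| ≤ δ :=
    (Real.abs_le_sqrt (single_le_sum (f := fun j => ((a j : ℝ) - b j) ^ 2)
      (fun _ _ => sq_nonneg _) (mem_univ i))).trans h
  exact_mod_cast hi.trans (Nat.le_ceil δ)

theorem lambda2_local_lattice_tendsto_zero_general
    (d : ℕ) (hd : 1 ≤ d) (δ : ℝ) :
    ∀ ε : ℝ, 0 < ε → ∃ R : ℕ, ∀ r : ℕ, R ≤ r →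
      ∀ G : SimpleGraph (Fin d → Fin (r + 1)),
        (∀ a b, G.Adj a b →
          Real.sqrt (∑ i, ((a i : ℝ) - (b i : ℝ)) ^ 2) ≤ δ) →
        lambda2 (lap G) ≤ ε := by
  intro ε hε
  set D := ⌈δ⌉₊
  set K : ℝ := 4 * D ^ 2 * (2 * D + 1) ^ d
  obtain ⟨R, hR⟩ := eventually_atTop.1 <| (eventually_ge_atTop 1).and <|
    (tendsto_const_div_atTop_nhds_zero_nat K).eventually (ge_mem_nhds hε)
  refine ⟨R, fun r hr G hG => ?_⟩
  obtain ⟨hr1, hKr⟩ := hR r hr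
  calc lambda2 (lap G) ≤ K / r := by
        simpa using lambda2_lap_le_of_forall_adj_abs_sub_le ⟨0, hd⟩ hr1 G
          fun a b hab => abs_sub_le_natCeil_of_sqrt_sum_sq_le (hG a b hab)
    _ ≤ ε := hKr

/-- Locally connected arrays on the lattice points of the hypercube `[0,r]^d` (every edge
joins vertices at Euclidean distance at most `δ`) have algebraic connectivity tending
to `0` as the array size grows: for fixed `d ≥ 1` and `δ > 0`, for every `ε > 0` there
is an `R` such that for all `r ≥ R`, every such graph `G` has `λ₂(L(G)) ≤ ε`. -/
theorem lambda2_local_lattice_tendsto_zero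
    (d : ℕ) (hd : 1 ≤ d) (δ : ℝ) (hδ : 0 < δ) :
    ∀ ε : ℝ, 0 < ε → ∃ R : ℕ, ∀ r : ℕ, R ≤ r →
      ∀ G : SimpleGraph (Fin d → Fin (r + 1)),
        (∀ a b, G.Adj a b →
          Real.sqrt (∑ i, ((a i : ℝ) - (b i : ℝ)) ^ 2) ≤ δ) →
        lambda2 (lap G) ≤ ε :=
  lambda2_local_lattice_tendsto_zero_general d hd δ
end
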